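/- Every residually torsion-free nilpotent group G is orderable: there exists a linear order ≤ on G such that for all x, y, z ∈ G, x ≤ y implies z·x ≤ z·y and x·z ≤ y·z. -/

import Mathlib

/-!
A bi-invariant linear order is the same thing as its positive cone: a conjugation-invariant
subsemigroup `P` with `G = P ⊔ {1} ⊔ P⁻¹`. A torsion-free abelian group embeds in a
`ℚ`-vector space, which is ordered lexicographically along a basis. If `G` is torsion-free
nilpotent then so is `G ⧸ Z(G)`, so by induction on the nilpotency class the cones of `Z(G)`
and of `G ⧸ Z(G)` glue to a cone of `G`. Finally, well-order the normal subgroups `N` with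
`G ⧸ N` torsion-free nilpotent; `g ≠ 1` is declared positive when it is positive in `G ⧸ N`
for the first such `N` not containing `g`.
-/

def IsTorsionFreeNilpotentQuotient {G : Type*} [Group G] (N : Subgroup G)
    [N.Normal] : Prop :=
  Group.IsNilpotent (G ⧸ N) ∧ (∀ g : G ⧸ N, g ≠ 1 → ¬IsOfFinOrder g)

def IsResiduallyTorsionFreeNilpotent (G : Type*) [Group G] : Prop :=
  ∀ g : G, g ≠ 1 → ∃ (N : Subgroup G) (hN : N.Normal),
    g ∉ N ∧ @IsTorsionFreeNilpotentQuotient G _ N hN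

open QuotientGroup
open scoped commutatorElement

/-- `P` is the set of elements `> 1` of a linear order on `G` invariant under left and right
multiplication. -/
structure IsPositiveCone {G : Type*} [Group G] (P : Set G) : Prop where
  mul_mem {a b : G} : a ∈ P → b ∈ P → a * b ∈ P
  one_notMem : (1 : G) ∉ P
  mem_or_inv_mem {a : G} : a ≠ 1 → a ∈ P ∨ a⁻¹ ∈ P
  conj_mem {a : G} : a ∈ P → ∀ g : G, g * a * g⁻¹ ∈ P

section

variable {G : Type*} [Group G]

namespace IsPositiveCone

variable {P : Set G}

theorem inv_notMem (hP : IsPositiveCone P) {a : G} (ha : a ∈ P) : a⁻¹ ∉ P := fun hinv =>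
  hP.one_notMem (by simpa using hP.mul_mem ha hinv)

theorem exists_biInvariant_linearOrder (hP : IsPositiveCone P) :
    ∃ r : G → G → Prop, IsLinearOrder G r ∧
      (∀ x y z : G, r x y → r (z * x) (z * y)) ∧
      (∀ x y z : G, r x y → r (x * z) (y * z)) := by
  refine ⟨fun x y => x = y ∨ x⁻¹ * y ∈ P,
    { refl := fun _ => .inl rfl, trans := ?_, antisymm := ?_, total := ?_ }, ?_, ?_⟩
  · rintro x y z (rfl | hxy) (rfl | hyz)
    exacts [.inl rfl, .inr hyz, .inr hxy, .inr (by simpa using hP.mul_mem hxy hyz)]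
  · rintro x y (rfl | hxy) (hyx | hyx)
    exacts [rfl, rfl, hyx.symm, (hP.inv_notMem hxy (by simpa using hyx)).elim]
  · intro x y
    by_cases hxy : x = y
    · exact .inl (.inl hxy)
    rcases hP.mem_or_inv_mem (a := x⁻¹ * y) (by rwa [Ne, inv_mul_eq_one]) with h | h
    exacts [.inl (.inr h), .inr (.inr (by simpa using h))]
  · rintro x y z (rfl | hxy)
    exacts [.inl rfl, .inr (by simpa [mul_assoc] using hxy)]
  · rintro x y z (rfl | hxy)
    · exact .inl rfl
    · exact .inr (by simpa [mul_assoc] using hP.conj_mem hxy z⁻¹)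

theorem of_quotient {N : Subgroup G} [N.Normal] {PN : Set N}
    (hPN : IsPositiveCone PN) (hconj : ∀ a ∈ PN, ∀ g : G, MulAut.conjNormal g a ∈ PN)
    {PK : Set (G ⧸ N)} (hPK : IsPositiveCone PK) :
    IsPositiveCone (((↑) : G → G ⧸ N) ⁻¹' PK ∪ Subtype.val '' PN) where
  mul_mem := by
    rintro a b (ha | ⟨a, ha, rfl⟩) (hb | ⟨b, hb, rfl⟩)
    · exact .inl (by simpa using hPK.mul_mem ha hb)
    · exact .inl (by simpa [(eq_one_iff _).mpr b.2] using ha)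
    · exact .inl (by simpa [(eq_one_iff _).mpr a.2] using hb)
    · exact .inr ⟨a * b, hPN.mul_mem ha hb, rfl⟩
  one_notMem := by
    rintro (h | ⟨a, ha, h⟩)
    · exact hPK.one_notMem h
    · exact hPN.one_notMem (by rwa [show a = 1 from Subtype.ext h] at ha)
  mem_or_inv_mem {a} ha := by
    by_cases haN : a ∈ N
    · rcases hPN.mem_or_inv_mem (a := ⟨a, haN⟩) (by simpa [← Subtype.coe_ne_coe] using ha)
        with h | h
      exacts [.inl (.inr ⟨_, h, rfl⟩), .inr (.inr ⟨_, h, rfl⟩)]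
    · rcases hPK.mem_or_inv_mem (a := (a : G ⧸ N)) (by rwa [Ne, eq_one_iff]) with h | h
      exacts [.inl (.inl h), .inr (.inl h)]
  conj_mem := by
    rintro a (ha | ⟨a, ha, rfl⟩) g
    · exact .inl (by simpa using hPK.conj_mem ha g)
    · exact .inr ⟨_, hconj a ha g, MulAut.conjNormal_apply g a⟩

end IsPositiveCone

/-- The witness `i` is necessarily the first index with `g ∉ N i`, since `(g : G ⧸ N i) ∈ P i`
forces `(g : G ⧸ N i) ≠ 1`. -/
theorem isPositiveCone_lex {ι : Type*} [LinearOrder ι] [WellFoundedLT ι]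
    (N : ι → Subgroup G) [∀ i, (N i).Normal] {P : ∀ i, Set (G ⧸ N i)}
    (hP : ∀ i, IsPositiveCone (P i)) (hsep : ∀ g : G, g ≠ 1 → ∃ i, g ∉ N i) :
    IsPositiveCone {g : G | ∃ i, (∀ j < i, g ∈ N j) ∧ (g : G ⧸ N i) ∈ P i} where
  mul_mem := by
    rintro a b ⟨i, hai, ha⟩ ⟨j, hbj, hb⟩
    rcases lt_trichotomy i j with hij | rfl | hji
    · refine ⟨i, fun k hk => mul_mem (hai k hk) (hbj k (hk.trans hij)), ?_⟩
      simpa [(eq_one_iff _).mpr (hbj i hij)] using ha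
    · exact ⟨i, fun k hk => mul_mem (hai k hk) (hbj k hk), by simpa using (hP i).mul_mem ha hb⟩
    · refine ⟨j, fun k hk => mul_mem (hai k (hk.trans hji)) (hbj k hk), ?_⟩
      simpa [(eq_one_iff _).mpr (hai j hji)] using hb
  one_notMem := by
    rintro ⟨i, -, h⟩
    exact (hP i).one_notMem h
  mem_or_inv_mem {a} ha := by
    obtain ⟨i, hai, hmin⟩ := wellFounded_lt.has_min {i | a ∉ N i} (hsep a ha)
    have hbelow : ∀ j < i, a ∈ N j := fun j hj => not_not.mp fun h => hmin j h hj
    rcases (hP i).mem_or_inv_mem (a := (a : G ⧸ N i)) (by rwa [Ne, eq_one_iff]) with h | h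
    · exact .inl ⟨i, hbelow, h⟩
    · exact .inr ⟨i, fun j hj => inv_mem (hbelow j hj), by simpa using h⟩
  conj_mem := by
    rintro a ⟨i, hai, ha⟩ g
    exact ⟨i, fun j hj => (inferInstance : (N j).Normal).conj_mem a (hai j hj) g,
      by simpa using (hP i).conj_mem ha g⟩

theorem isPositiveCone_preimage_Ioi_one {H : Type*} [CommGroup H] [LinearOrder H]
    [IsOrderedMonoid H] {f : G →* H} (hf : Function.Injective f) :
    IsPositiveCone (f ⁻¹' Set.Ioi 1) where
  mul_mem ha hb := by simpa using one_lt_mul' ha hb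
  one_notMem := by simp
  mem_or_inv_mem {a} ha := by
    rcases lt_or_gt_of_ne (hf.ne ha) with h | h
    · exact .inr (by simpa using h)
    · exact .inl (by simpa using h)
  conj_mem ha g := by simpa using ha

theorem exists_isPositiveCone_of_isMulTorsionFree (M : Type*) [CommGroup M]
    [IsMulTorsionFree M] : ∃ P : Set M, IsPositiveCone P := by
  let V := DivisibleHull (Additive M)
  let b := Module.Basis.ofVectorSpace ℚ V
  obtain ⟨_, -⟩ := exists_wellFoundedLT (Module.Basis.ofVectorSpaceIndex ℚ V)
  let f : Additive M →+ Lex (_ →₀ ℚ) :=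
    ((toLexLinearEquiv ℚ _).toLinearMap ∘ₗ b.repr.toLinearMap).toAddMonoidHom.comp
      (DivisibleHull.coeAddMonoidHom _)
  have hf : Function.Injective f :=
    toLex.injective.comp (b.repr.injective.comp DivisibleHull.coe_injective)
  exact ⟨_, isPositiveCone_preimage_Ioi_one (f := f.toMultiplicativeRight) hf⟩

theorem commutatorElement_pow_left {x g : G} (h : Commute ⁅x, g⁆ x) (n : ℕ) :
    ⁅x ^ n, g⁆ = ⁅x, g⁆ ^ n := by
  induction n with
  | zero => simp
  | succ n ih =>
    calc ⁅x ^ (n + 1), g⁆ = x * ⁅x ^ n, g⁆ * x⁻¹ * ⁅x, g⁆ := by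
          simp only [commutatorElement_def]; group
      _ = ⁅x, g⁆ ^ (n + 1) := by
          rw [ih, (h.pow_left n).symm.eq, mul_inv_cancel_right, pow_succ]

theorem commutatorElement_pow_eq_one_of_mem_center {x g : G} {n : ℕ}
    (hc : ⁅x, g⁆ ∈ Subgroup.center G) (hx : x ^ n ∈ Subgroup.center G) : ⁅x, g⁆ ^ n = 1 := by
  rw [← commutatorElement_pow_left (Subgroup.mem_center_iff.mp hc x).symm,
    commutatorElement_eq_one_iff_commute]
  exact (Subgroup.mem_center_iff.mp hx g).symm

namespace Subgroup

theorem mem_upperCentralSeries_succ_iff_mk_mem_center {k : ℕ} {x : G} :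
    x ∈ upperCentralSeries G (k + 1) ↔ mk' (upperCentralSeries G k) x ∈ center _ := by
  rw [← mem_comap, ← upperCentralSeriesStep_eq_comap_center]
  rfl

theorem mem_upperCentralSeries_of_pow_mem (htf : ∀ g : G, g ≠ 1 → ¬IsOfFinOrder g) {n : ℕ}
    (hn : n ≠ 0) {k : ℕ} {x : G} (hx : x ∈ upperCentralSeries G (k + 1))
    (hxn : x ^ n ∈ upperCentralSeries G k) : x ∈ upperCentralSeries G k := by
  induction k generalizing x with
  | zero =>
    by_contra h
    exact htf x (by simpa using h)
      (isOfFinOrder_iff_pow_eq_one.mpr ⟨n, hn.bot_lt, by simpa using hxn⟩)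
  | succ k ih =>
    refine mem_upperCentralSeries_succ_iff.mpr fun g =>
      ih (mem_upperCentralSeries_succ_iff.mp hx g) ?_
    -- modulo `upperCentralSeries G k`, both `⁅x, g⁆` and `x ^ n` are central
    rw [← ker_mk' (upperCentralSeries G k), MonoidHom.mem_ker, map_pow, map_commutatorElement]
    apply commutatorElement_pow_eq_one_of_mem_center
    · rw [← map_commutatorElement, ← mem_upperCentralSeries_succ_iff_mk_mem_center]
      exact mem_upperCentralSeries_succ_iff.mp hx g
    · rwa [← map_pow, ← mem_upperCentralSeries_succ_iff_mk_mem_center]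

theorem mem_center_of_pow_mem_center [Group.IsNilpotent G]
    (htf : ∀ g : G, g ≠ 1 → ¬IsOfFinOrder g) {n : ℕ} (hn : n ≠ 0) {x : G}
    (hx : x ^ n ∈ center G) : x ∈ center G := by
  have hdescend : ∀ j, x ∈ upperCentralSeries G (j + 1) → x ∈ upperCentralSeries G 1 := by
    intro j
    induction j with
    | zero => exact id
    | succ j ih =>
      refine fun hxj => ih (mem_upperCentralSeries_of_pow_mem htf hn hxj ?_)
      exact upperCentralSeries_mono G (Nat.le_add_left 1 j) (by rwa [upperCentralSeries_one])
  obtain ⟨m, hm⟩ := Group.IsNilpotent.nilpotent G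
  rw [← upperCentralSeries_one]
  exact hdescend m (upperCentralSeries_mono G m.le_succ (hm ▸ mem_top x))

theorem not_isOfFinOrder_quotient_center [Group.IsNilpotent G]
    (htf : ∀ g : G, g ≠ 1 → ¬IsOfFinOrder g) (q : G ⧸ center G) (hq : q ≠ 1) :
    ¬IsOfFinOrder q := by
  obtain ⟨x, rfl⟩ := mk_surjective q
  intro hfin
  obtain ⟨n, hn, hxn⟩ := isOfFinOrder_iff_pow_eq_one.mp hfin
  rw [← mk_pow, eq_one_iff] at hxn
  exact hq ((eq_one_iff x).mpr (mem_center_of_pow_mem_center htf hn.ne' hxn))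

end Subgroup

open scoped IsMulCommutative in
variable (G) in
theorem exists_isPositiveCone_of_isNilpotent [Group.IsNilpotent G]
    (htf : ∀ g : G, g ≠ 1 → ¬IsOfFinOrder g) : ∃ P : Set G, IsPositiveCone P := by
  refine Group.nilpotent_center_quotient_ind (P := fun G _ _ =>
    (∀ g : G, g ≠ 1 → ¬IsOfFinOrder g) → ∃ P : Set G, IsPositiveCone P) G ?_ ?_ htf
  · intro G _ _ _
    exact ⟨∅, ⟨fun h => h.elim, id, fun ha => (ha (Subsingleton.elim _ _)).elim, fun h => h.elim⟩⟩
  · intro G _ _ ih htf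
    obtain ⟨PK, hPK⟩ := ih (Subgroup.not_isOfFinOrder_quotient_center htf)
    have : IsMulTorsionFree (Subgroup.center G) := IsMulTorsionFree.of_not_isOfFinOrder
      fun a ha hfin => htf a (by simpa using ha) (Submonoid.isOfFinOrder_coe.mpr hfin)
    obtain ⟨PN, hPN⟩ := exists_isPositiveCone_of_isMulTorsionFree (Subgroup.center G)
    refine ⟨_, hPN.of_quotient (fun a ha g => ?_) hPK⟩
    rwa [show MulAut.conjNormal g a = a from Subtype.ext (by
      rw [MulAut.conjNormal_apply, Subgroup.mem_center_iff.mp a.2 g, mul_inv_cancel_right])]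

end

/-- every residually torsion-free nilpotent group is orderable:
it admits a linear (total) order invariant under left and right multiplication. -/
theorem stmt_11 (G : Type*) [Group G]
    (hres : IsResiduallyTorsionFreeNilpotent G) :
    ∃ r : G → G → Prop, IsLinearOrder G r ∧
      (∀ x y z : G, r x y → r (z * x) (z * y)) ∧
      (∀ x y z : G, r x y → r (x * z) (y * z)) := by
  let ι := {N : Subgroup G // ∃ hN : N.Normal, @IsTorsionFreeNilpotentQuotient G _ N hN}
  have (i : ι) : i.1.Normal := i.2.1
  obtain ⟨_, _⟩ := exists_wellFoundedLT ι
  choose P hP using fun i : ι =>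
    haveI := i.2.2.1
    exists_isPositiveCone_of_isNilpotent (G ⧸ i.1) i.2.2.2
  refine (isPositiveCone_lex (fun i : ι => i.1) hP fun g hg => ?_).exists_biInvariant_linearOrder
  obtain ⟨N, hN, hgN, hq⟩ := hres g hg
  exact ⟨⟨N, hN, hq⟩, hgN⟩
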